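/- arXiv:2101.10916 — 4 statements merged into one kernel-verified Lean document; each statement's English description precedes it below -/
import Mathlib

section
/- Let $K_r^d$ be the complete $d$-uniform hypergraph on a vertex set $V$ of size $r$, and let $G_1,\ldots,G_m$ be $d$-uniform hypergraphs on $V$, each of which is $c$-partite (its vertex set can be partitioned into $c$ classes such that every edge has all its vertices in distinct classes), with $\bigcup_{i=1}^m G_i = K_r^d$. Let $\tau(G_i)$ denote the number of non-isolated vertices of $G_i$. Then $\log\frac{c}{d-1}\sum_{i=1}^m \tau(G_i) \geq \log\frac{r}{d-1}$. -/
open Finset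
open scoped Classical

/-- The number of non-isolated vertices of a hypergraph given by its edge set. -/
noncomputable def tauH {V : Type*} [Fintype V] (G : Finset (Finset V)) : ℕ :=
  (Finset.univ.filter fun v : V => ∃ e ∈ G, v ∈ e).card

/-!
Choose for every `G i` a set `S i` of `d - 1` of the `c` colours, and call a vertex compatible
with the choice if every `G i` in which it is non-isolated colours it inside `S i`. Any `d`
compatible vertices would form an edge of some `G i` whose `d` distinct colours fit into `S i`,
so at most `d - 1` vertices are compatible with any choice. A vertex that is non-isolated in `n`
of the hypergraphs is compatible with the fraction `((d - 1) / c) ^ n` of all choices, so double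
counting gives `∑ v, ((d - 1) / c) ^ n v ≤ d - 1`. As `n v ≤ ∑ i, τ(G i)`, taking logarithms
finishes the proof.
-/

theorem Finset.card_filter_mem_powersetCard_mul {α : Type*} (t : Finset α) {x : α} (hx : x ∈ t)
    (k : ℕ) : #{s ∈ t.powersetCard k | x ∈ s} * #t = k * (#t).choose k := by
  obtain _ | j := k
  · simp [powersetCard_zero]
  obtain ⟨n, hn⟩ : ∃ n, #t = n + 1 := ⟨#t - 1, by have := card_pos.2 ⟨x, hx⟩; omega⟩
  have h := card_filter_powersetCard_subset {x} t (j + 1) (by simpa) (by simp)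
  simp only [singleton_subset_iff, card_singleton, hn, add_tsub_cancel_right] at h
  rw [h, hn, mul_comm, Nat.add_one_mul_choose_eq, mul_comm]

theorem Real.logb_div_le_logb_inv_mul_of_mul_pow_le {b x y q : ℝ} (hb : 1 < b) (hx : 0 < x)
    (hy : 0 < y) (hq : 0 < q) {n : ℕ} (h : x * q ^ n ≤ y) :
    Real.logb b (x / y) ≤ Real.logb b q⁻¹ * n := by
  have hxy : x / y ≤ q⁻¹ ^ n := by
    rw [div_le_iff₀ hy, inv_pow, inv_mul_eq_div, le_div_iff₀ (pow_pos hq n)]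
    exact h
  calc Real.logb b (x / y) ≤ Real.logb b (q⁻¹ ^ n) :=
        Real.logb_le_logb_of_le hb (div_pos hx hy) hxy
    _ = Real.logb b q⁻¹ * n := by rw [Real.logb_pow, mul_comm]

section Hypergraph

variable {V ι κ : Type*} [Fintype V]

def Compatible (G : ι → Finset (Finset V)) (f : ι → V → κ) (S : ι → Finset κ) (v : V) : Prop :=
  ∀ i, (∃ e ∈ G i, v ∈ e) → f i v ∈ S i

variable {G : ι → Finset (Finset V)} {f : ι → V → κ} {k : ℕ}

theorem card_compatible_le (hf : ∀ i, ∀ e ∈ G i, Set.InjOn (f i) e)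
    (hcover : ∀ e : Finset V, #e = k + 1 → ∃ i, e ∈ G i) {S : ι → Finset κ}
    (hS : ∀ i, #(S i) ≤ k) : #{v | Compatible G f S v} ≤ k := by
  by_contra! hlarge
  obtain ⟨e, he, hecard⟩ := exists_subset_card_eq (Nat.succ_le_of_lt hlarge)
  obtain ⟨i, hi⟩ := hcover e hecard
  have himage : e.image (f i) ⊆ S i := by
    simp only [subset_iff, mem_image, forall_exists_index, and_imp, forall_apply_eq_imp_iff₂]
    intro v hv
    exact (mem_filter.1 (he hv)).2 i ⟨e, hi, hv⟩
  have := card_le_card himage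
  rw [card_image_of_injOn (hf i e hi), hecard] at this
  exact absurd (this.trans (hS i)) (Nat.not_succ_le_self k)

variable [Fintype ι]

noncomputable def nonisolatedCount (G : ι → Finset (Finset V)) (v : V) : ℕ :=
  #{i | ∃ e ∈ G i, v ∈ e}

theorem sum_nonisolatedCount (G : ι → Finset (Finset V)) :
    ∑ v, nonisolatedCount G v = ∑ i, tauH (G i) := by
  simp only [nonisolatedCount, tauH, card_filter]
  exact sum_comm

theorem nonisolatedCount_le_sum_tauH (G : ι → Finset (Finset V)) (v : V) :
    nonisolatedCount G v ≤ ∑ i, tauH (G i) :=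
  sum_nonisolatedCount G ▸ single_le_sum (fun _ _ => Nat.zero_le _) (mem_univ v)

variable [Fintype κ]

theorem card_filter_compatible_eq_prod (v : V) :
    #{S ∈ Fintype.piFinset fun _ : ι => powersetCard k (univ : Finset κ) | Compatible G f S v}
      = ∏ i, #{s ∈ powersetCard k univ | (∃ e ∈ G i, v ∈ e) → f i v ∈ s} := by
  rw [← Fintype.card_piFinset]
  congr 1
  ext S
  simp [Compatible, forall_and]

theorem card_filter_powersetCard_imp_mem (P : Prop) [Decidable P] (x : κ) :
    (#{s ∈ powersetCard k (univ : Finset κ) | P → x ∈ s} : ℝ)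
      = (if P then (k : ℝ) / Fintype.card κ else 1) * (Fintype.card κ).choose k := by
  by_cases hP : P
  · have hκ : (0 : ℝ) < Fintype.card κ := by exact_mod_cast Fintype.card_pos_iff.2 ⟨x⟩
    have h := card_filter_mem_powersetCard_mul univ (mem_univ x) k
    rw [card_univ] at h
    simp only [hP, forall_const, if_true]
    rw [div_mul_eq_mul_div, eq_div_iff hκ.ne']
    exact_mod_cast h
  · simp [hP, card_powersetCard]

theorem card_filter_compatible_eq_mul_pow (v : V) :
    (#{S ∈ Fintype.piFinset fun _ : ι => powersetCard k (univ : Finset κ) | Compatible G f S v}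
      : ℝ) = ((Fintype.card κ).choose k : ℝ) ^ Fintype.card ι
        * ((k : ℝ) / Fintype.card κ) ^ nonisolatedCount G v := by
  simp only [card_filter_compatible_eq_prod, Nat.cast_prod, card_filter_powersetCard_imp_mem,
    prod_mul_distrib, prod_const, card_univ, prod_ite, nonisolatedCount]
  ring

theorem sum_pow_nonisolatedCount_le (hk : k ≤ Fintype.card κ)
    (hf : ∀ i, ∀ e ∈ G i, Set.InjOn (f i) e)
    (hcover : ∀ e : Finset V, #e = k + 1 → ∃ i, e ∈ G i) :
    ∑ v, ((k : ℝ) / Fintype.card κ) ^ nonisolatedCount G v ≤ k := by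
  set A := Fintype.piFinset fun _ : ι => powersetCard k (univ : Finset κ)
  set N : ℝ := ((Fintype.card κ).choose k : ℝ) ^ Fintype.card ι
  have hN : 0 < N := pow_pos (by exact_mod_cast Nat.choose_pos hk) _
  have hA : (#A : ℝ) = N := by simp [A, N, card_powersetCard]
  have hdouble : ∑ v, #{S ∈ A | Compatible G f S v} = ∑ S ∈ A, #{v | Compatible G f S v} := by
    simp only [card_filter]
    exact sum_comm
  have hcount : ∑ S ∈ A, #{v | Compatible G f S v} ≤ #A * k := by
    rw [← smul_eq_mul, ← sum_const]
    exact sum_le_sum fun S hS => card_compatible_le hf hcover fun i =>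
      (mem_powersetCard.1 (Fintype.mem_piFinset.1 hS i)).2.le
  refine le_of_mul_le_mul_left ?_ hN
  calc N * ∑ v, ((k : ℝ) / Fintype.card κ) ^ nonisolatedCount G v
      = ∑ v, (#{S ∈ A | Compatible G f S v} : ℝ) := by
        simp only [mul_sum, card_filter_compatible_eq_mul_pow, N, A]
    _ ≤ #A * k := by exact_mod_cast hdouble ▸ hcount
    _ = N * k := by rw [hA]

end Hypergraph

theorem hansel_hypergraph_general {V : Type*} [Fintype V]
    (r d c m : ℕ) (hrV : Fintype.card V = r) (hd : 2 ≤ d) (hdr : d ≤ r) (hdc : d ≤ c)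
    (G : Fin m → Finset (Finset V))
    (hpartite : ∀ i, ∃ f : V → Fin c, ∀ e ∈ G i, Set.InjOn f (e : Set V))
    (hcover : ∀ e : Finset V, e.card = d → ∃ i, e ∈ G i) :
    Real.logb 2 ((c : ℝ) / ((d : ℝ) - 1)) * ∑ i, (tauH (G i) : ℝ)
      ≥ Real.logb 2 ((r : ℝ) / ((d : ℝ) - 1)) := by
  choose f hf using hpartite
  obtain ⟨k, rfl⟩ : ∃ k, d = k + 1 := ⟨d - 1, by omega⟩
  have hk : (0 : ℝ) < k := by exact_mod_cast (by omega : 0 < k)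
  have hkc : (k : ℝ) ≤ c := by exact_mod_cast (by omega : k ≤ c)
  set q : ℝ := k / c
  have hsum : ∑ v, q ^ nonisolatedCount G v ≤ k := by
    simpa [q] using sum_pow_nonisolatedCount_le (κ := Fin c) (by rw [Fintype.card_fin]; omega) hf hcover
  have hmain : (r : ℝ) * q ^ (∑ i, tauH (G i)) ≤ k := calc
    (r : ℝ) * q ^ (∑ i, tauH (G i)) = ∑ _v : V, q ^ (∑ i, tauH (G i)) := by simp [hrV]
    _ ≤ ∑ v, q ^ nonisolatedCount G v := sum_le_sum fun v _ =>
      pow_le_pow_of_le_one (by positivity) (div_le_one_of_le₀ hkc (by positivity))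
        (nonisolatedCount_le_sum_tauH G v)
    _ ≤ k := hsum
  have hr : (0 : ℝ) < r := by exact_mod_cast (by omega : 0 < r)
  have := Real.logb_div_le_logb_inv_mul_of_mul_pow_le one_lt_two hr hk
    (div_pos hk (hk.trans_le hkc)) hmain
  push_cast at this ⊢
  simpa [q, inv_div] using this

/-- Hansel's lemma for hypergraphs. -/
theorem hansel_hypergraph {V : Type*} [Fintype V] [DecidableEq V]
    (r d c m : ℕ) (hrV : Fintype.card V = r) (hd : 2 ≤ d) (hdr : d ≤ r) (hdc : d ≤ c)
    (G : Fin m → Finset (Finset V))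
    (huniform : ∀ i, ∀ e ∈ G i, e.card = d)
    (hpartite : ∀ i, ∃ f : V → Fin c, ∀ e ∈ G i, Set.InjOn f (e : Set V))
    (hcover : ∀ e : Finset V, e.card = d → ∃ i, e ∈ G i) :
    Real.logb 2 ((c : ℝ) / ((d : ℝ) - 1)) * ∑ i, (tauH (G i) : ℝ)
      ≥ Real.logb 2 ((r : ℝ) / ((d : ℝ) - 1)) :=
  hansel_hypergraph_general r d c m hrV hd hdr hdc G hpartite hcover
end

section
/- Let $j \geq 2$, $0 < \epsilon \leq 1$, and let $p, q$ be probability distributions on $\{1,\ldots,b\}$ with $p_1 \geq 1-\epsilon$ and $q_1 \geq 1-\epsilon$. Then $\Psi(p,q) \leq 2(j+1)\epsilon^{j-1}$. -/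
open Finset

/-- Ψ defined via a sum over permutations of `{1,…,b}`. -/
noncomputable def psiPerm (b j : ℕ) (h : j + 1 ≤ b) (p q : Fin b → ℝ) : ℝ :=
  (1 / (Nat.factorial (b - j - 1) : ℝ)) *
    ∑ σ : Equiv.Perm (Fin b),
      ((∏ t : Fin j, p (σ (Fin.castLE (by omega) t))) * q (σ (⟨j, by omega⟩ : Fin b))
        + (∏ t : Fin j, q (σ (Fin.castLE (by omega) t))) * p (σ (⟨j, by omega⟩ : Fin b)))

/-! Ψ(p, q) is `(b-j-1)!` times a sum over injective `(j+1)`-tuples: the permutations with a given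
restriction to `{0, …, j}` form a coset of its stabilizer, which has order `(b-j-1)!`.
An injective tuple hits `0` at most once among its first `j` entries; splitting by the position of
that hit (or its absence) gives `j + 1` classes, in each of which at least `j - 1` entries avoid `0`
and so carry total weight at most `∑_{a ≠ 0} p a ≤ ε`. -/

open Function MulAction
open scoped Nat

namespace MulAction

variable {G X : Type*} [Group G] [MulAction G X] [Fintype G] [DecidableEq X]

theorem card_filter_smul_eq_smul (x : X) (g₀ : G) :
    #{g : G | g • x = g₀ • x} = Nat.card (stabilizer G x) := by
  rw [← Fintype.card_subtype, Nat.card_eq_fintype_card]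
  refine Fintype.card_congr
    { toFun := fun g => ⟨g₀⁻¹ * g.1, by simp [mem_stabilizer_iff, mul_smul, g.2]⟩
      invFun := fun g => ⟨g₀ * g.1, by simp [mul_smul, mem_stabilizer_iff.mp g.2]⟩
      left_inv := fun g => by simp
      right_inv := fun g => by simp }

theorem sum_smul_eq_card_stabilizer_nsmul [IsPretransitive G X] [Fintype X] {M : Type*}
    [AddCommMonoid M] (x : X) (f : X → M) :
    ∑ g : G, f (g • x) = Nat.card (stabilizer G x) • ∑ y, f y := by
  rw [← sum_fiberwise univ (· • x), smul_sum]
  refine sum_congr rfl fun y _ => ?_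
  obtain ⟨g₀, rfl⟩ := exists_smul_eq G x y
  rw [sum_congr rfl fun g hg => congrArg f (mem_filter.mp hg).2, sum_const,
    card_filter_smul_eq_smul]

end MulAction

namespace Equiv.Perm

variable {α : Type*} [Fintype α] [DecidableEq α] {m : ℕ}

theorem card_stabilizer_embedding (ι : Fin m ↪ α) :
    Nat.card (stabilizer (Perm α) ι) = (Fintype.card α - m)! := by
  have := isMultiplyPretransitive α m
  have hm : m ≤ Fintype.card α := by simpa using Fintype.card_le_of_embedding ι
  have h := sum_smul_eq_card_stabilizer_nsmul (G := Perm α) ι (fun _ => 1)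
  simp only [sum_const, smul_eq_mul, mul_one] at h
  rw [Finset.card_univ, Finset.card_univ, Fintype.card_perm, Fintype.card_embedding_eq,
    Fintype.card_fin, ← Nat.factorial_mul_descFactorial hm] at h
  exact (Nat.eq_of_mul_eq_mul_right (Nat.descFactorial_pos.mpr hm) h).symm

theorem sum_smul_embedding {M : Type*} [AddCommMonoid M] (ι : Fin m ↪ α) (f : (Fin m ↪ α) → M) :
    ∑ σ : Perm α, f (σ • ι) = (Fintype.card α - m)! • ∑ v, f v := by
  have := isMultiplyPretransitive α m
  rw [sum_smul_eq_card_stabilizer_nsmul, card_stabilizer_embedding]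

end Equiv.Perm

theorem Finset.sum_biUnion_le_sum_sum {κ β : Type*} [DecidableEq β] (s : Finset κ)
    (t : κ → Finset β) {f : β → ℝ} (hf : ∀ x, 0 ≤ f x) :
    ∑ x ∈ s.biUnion t, f x ≤ ∑ c ∈ s, ∑ x ∈ t c, f x := by
  classical
  induction s using Finset.induction with
  | empty => simp
  | insert c s hc ih =>
    rw [biUnion_insert, sum_insert hc]
    have := sum_union_inter (s₁ := t c) (s₂ := s.biUnion t) (f := f)
    have := sum_nonneg fun x (_ : x ∈ t c ∩ s.biUnion t) => hf x
    linarith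

section OnlyAt

variable {ι α : Type*} [Fintype ι] [DecidableEq ι] [Fintype α] [DecidableEq α]

/-- `piFinset (onlyAt a₀ c)` consists of the tuples taking the value `a₀` at position `c` and
nowhere else (`c = none`: never). -/
def onlyAt (a₀ : α) (c : Option ι) (i : ι) : Finset α :=
  if c = some i then {a₀} else univ.erase a₀

theorem exists_mem_piFinset_onlyAt (a₀ : α) {u : ι → α} (hu : Injective u) :
    ∃ c, u ∈ Fintype.piFinset (onlyAt a₀ c) := by
  by_cases h : ∃ i, u i = a₀
  · obtain ⟨i₀, hi₀⟩ := h
    refine ⟨some i₀, Fintype.mem_piFinset.mpr fun i => ?_⟩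
    by_cases hi : i = i₀
    · simp [onlyAt, hi, hi₀]
    · have : u i ≠ a₀ := fun h' => hi (hu (h'.trans hi₀.symm))
      simp [onlyAt, Ne.symm hi, this]
  · simp only [not_exists] at h
    exact ⟨none, Fintype.mem_piFinset.mpr fun i => by simp [onlyAt, h i]⟩

theorem sum_piFinset_onlyAt_prod_le {p : α → ℝ} {a₀ : α} {ε : ℝ} (hp : ∀ a, 0 ≤ p a)
    (hp₀ : p a₀ ≤ 1) (hε : ∑ a ∈ univ.erase a₀, p a ≤ ε) (hε1 : ε ≤ 1) (c : Option ι) :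
    ∑ x ∈ Fintype.piFinset (onlyAt a₀ c), ∏ i, p (x i) ≤ ε ^ (Fintype.card ι - 1) := by
  have hε0 : 0 ≤ ε := (sum_nonneg fun a _ => hp a).trans hε
  rw [← prod_univ_sum]
  have hfactor : ∀ i, ∑ a ∈ onlyAt a₀ c i, p a ≤ if c = some i then 1 else ε := by
    intro i
    unfold onlyAt
    split_ifs
    · rwa [sum_singleton]
    · exact hε
  calc ∏ i, ∑ a ∈ onlyAt a₀ c i, p a
      ≤ ∏ i, if c = some i then (1 : ℝ) else ε :=
        prod_le_prod (fun i _ => sum_nonneg fun a _ => hp a) fun i _ => hfactor i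
    _ ≤ ε ^ (Fintype.card ι - 1) := by
        cases c with
        | none =>
          simpa using pow_le_pow_of_le_one hε0 hε1 (Nat.sub_le _ 1)
        | some i₀ =>
          rw [← mul_prod_erase univ _ (mem_univ i₀), if_pos rfl, one_mul,
            prod_congr rfl fun i hi => if_neg (by simpa [eq_comm] using hi), prod_const,
            card_erase_of_mem (mem_univ i₀), Finset.card_univ]

end OnlyAt

theorem sum_embedding_prod_le_of_concentrated {ι α : Type*} [Fintype ι] [DecidableEq ι]
    [Fintype α] [DecidableEq α] {p : α → ℝ} {a₀ : α} {ε : ℝ} (hp : ∀ a, 0 ≤ p a)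
    (hsum : ∑ a, p a ≤ 1) (hp₀ : 1 - ε ≤ p a₀) (hε1 : ε ≤ 1) :
    ∑ u : ι ↪ α, ∏ i, p (u i) ≤ (Fintype.card ι + 1) * ε ^ (Fintype.card ι - 1) := by
  let coe : (ι ↪ α) ↪ (ι → α) := ⟨(⇑), DFunLike.coe_injective⟩
  have hp₀_le : p a₀ ≤ 1 := (single_le_sum (fun a _ => hp a) (mem_univ a₀)).trans hsum
  have hε : ∑ a ∈ univ.erase a₀, p a ≤ ε := by
    rw [sum_erase_eq_sub (mem_univ a₀)]; linarith
  have hcover : univ.map coe ⊆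
      (univ : Finset (Option ι)).biUnion fun c => Fintype.piFinset (onlyAt a₀ c) := by
    simp only [subset_iff, mem_map, mem_univ, true_and, mem_biUnion]
    rintro _ ⟨u, rfl⟩
    exact exists_mem_piFinset_onlyAt a₀ u.injective
  have hnonneg : ∀ x : ι → α, 0 ≤ ∏ i, p (x i) := fun x => prod_nonneg fun i _ => hp _
  calc ∑ u : ι ↪ α, ∏ i, p (u i)
      = ∑ x ∈ univ.map coe, ∏ i, p (x i) :=
        (sum_map univ coe fun x => ∏ i, p (x i)).symm
    _ ≤ ∑ c : Option ι, ∑ x ∈ Fintype.piFinset (onlyAt a₀ c), ∏ i, p (x i) :=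
        (sum_le_sum_of_subset_of_nonneg hcover fun x _ _ => hnonneg x).trans
          (sum_biUnion_le_sum_sum _ _ hnonneg)
    _ ≤ ∑ _c : Option ι, ε ^ (Fintype.card ι - 1) :=
        sum_le_sum fun c _ => sum_piFinset_onlyAt_prod_le hp hp₀_le hε hε1 c
    _ = (Fintype.card ι + 1) * ε ^ (Fintype.card ι - 1) := by simp

def prodInitMulLast {α : Type*} {j : ℕ} (p q : α → ℝ) (v : Fin (j + 1) → α) : ℝ :=
  (∏ k : Fin j, p (v k.castSucc)) * q (v (Fin.last j))

theorem sum_embedding_prodInitMulLast_le {α : Type*} [Fintype α] {p q : α → ℝ}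
    (hp : ∀ a, 0 ≤ p a) (hq : ∀ a, 0 ≤ q a) (j : ℕ) :
    ∑ v : Fin (j + 1) ↪ α, prodInitMulLast p q v ≤
      (∑ u : Fin j ↪ α, ∏ k, p (u k)) * ∑ a, q a := by
  let split : (Fin (j + 1) ↪ α) ↪ (Fin j ↪ α) × α :=
    ⟨fun v => (Fin.castSuccEmb.trans v, v (Fin.last j)), fun v w hvw => by
      simp only [Prod.mk.injEq] at hvw
      ext k
      induction k using Fin.lastCases with
      | last => exact hvw.2
      | cast k => exact DFunLike.congr_fun hvw.1 k⟩
  rw [sum_mul_sum, ← Fintype.sum_prod_type']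
  calc ∑ v : Fin (j + 1) ↪ α, prodInitMulLast p q v
      = ∑ w ∈ univ.map split, (∏ k, p (w.1 k)) * q w.2 :=
        (sum_map univ split fun w => (∏ k, p (w.1 k)) * q w.2).symm
    _ ≤ _ := sum_le_univ_sum_of_nonneg fun w => mul_nonneg (prod_nonneg fun k _ => hp _) (hq _)

theorem psiPerm_eq_sum_embedding (b j : ℕ) (h : j + 1 ≤ b) (p q : Fin b → ℝ) :
    psiPerm b j h p q =
      ∑ v : Fin (j + 1) ↪ Fin b, (prodInitMulLast p q v + prodInitMulLast q p v) := by
  have hfac : ((b - (j + 1))! : ℝ) ≠ 0 := by positivity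
  let f (v : Fin (j + 1) ↪ Fin b) : ℝ := prodInitMulLast p q v + prodInitMulLast q p v
  calc psiPerm b j h p q
      = 1 / ((b - j - 1)! : ℝ) * ∑ σ : Equiv.Perm (Fin b), f (σ • Fin.castLEEmb h) := rfl
    _ = _ := by
      rw [Equiv.Perm.sum_smul_embedding (Fin.castLEEmb h) f, Fintype.card_fin, nsmul_eq_mul,
        Nat.sub_sub, ← mul_assoc, one_div_mul_cancel hfac, one_mul]

theorem sum_embedding_prodInitMulLast_le_of_concentrated {α : Type*} [Fintype α] [DecidableEq α]
    {p q : α → ℝ} {a₀ : α} {ε : ℝ} (hp : ∀ a, 0 ≤ p a) (hq : ∀ a, 0 ≤ q a)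
    (hps : ∑ a, p a ≤ 1) (hqs : ∑ a, q a ≤ 1) (hp₀ : 1 - ε ≤ p a₀) (hε1 : ε ≤ 1) (j : ℕ) :
    ∑ v : Fin (j + 1) ↪ α, prodInitMulLast p q v ≤ (j + 1) * ε ^ (j - 1) := by
  have htuples := sum_embedding_prod_le_of_concentrated (ι := Fin j) hp hps hp₀ hε1
  rw [Fintype.card_fin] at htuples
  calc ∑ v : Fin (j + 1) ↪ α, prodInitMulLast p q v
      ≤ (∑ u : Fin j ↪ α, ∏ k, p (u k)) * ∑ a, q a := sum_embedding_prodInitMulLast_le hp hq j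
    _ ≤ ∑ u : Fin j ↪ α, ∏ k, p (u k) :=
        mul_le_of_le_one_right (sum_nonneg fun u _ => prod_nonneg fun k _ => hp _) hqs
    _ ≤ (j + 1) * ε ^ (j - 1) := htuples

theorem psi_concentrated_le (b j : ℕ) (h : j + 1 ≤ b)
    (ε : ℝ) (hε1 : ε ≤ 1)
    (p q : Fin b → ℝ) (hp : ∀ a, 0 ≤ p a) (hq : ∀ a, 0 ≤ q a)
    (hps : ∑ a, p a = 1) (hqs : ∑ a, q a = 1)
    (hp1 : 1 - ε ≤ p ⟨0, by omega⟩) (hq1 : 1 - ε ≤ q ⟨0, by omega⟩) :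
    psiPerm b j h p q ≤ 2 * (j + 1) * ε ^ (j - 1) := by
  rw [psiPerm_eq_sum_embedding, sum_add_distrib]
  linarith [sum_embedding_prodInitMulLast_le_of_concentrated hp hq hps.le hqs.le hp1 hε1 j,
    sum_embedding_prodInitMulLast_le_of_concentrated hq hp hqs.le hps.le hq1 hε1 j]
end

section
/- Let $M_1, M_2, M_3, M_4 \geq 0$ and let $\eta_0, \eta_1, \ldots, \eta_b \geq 0$ with $\sum_{i=0}^b \eta_i = 1$. Then $\eta_0^2 M_1 + 2\eta_0\sum_{i=1}^b \eta_i M_2 + \sum_{i=1}^b \eta_i^2 M_3 + 2\sum_{1 \leq i < h \leq b}\eta_i\eta_h M_4 \leq \max_{t \in [0,1]}\left(M_1 t^2 + 2M_2 t(1-t) + \max(M_3, M_4)(1-t)^2\right)$. -/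
open Finset

lemma sq_sum_eq_aux (b : ℕ) (η : Fin b → ℝ) :
    (∑ i, η i) ^ 2 = (∑ i, η i ^ 2)
      + 2 * ∑ pr ∈ Finset.univ.filter (fun pr : Fin b × Fin b => pr.1 < pr.2),
          η pr.1 * η pr.2 := by
  have htot : (∑ i, η i) ^ 2 = ∑ pr : Fin b × Fin b, η pr.1 * η pr.2 := by
    rw [sq, Finset.sum_mul_sum, ← Finset.sum_product']
    rfl
  have hswap : ∑ pr ∈ Finset.univ.filter (fun pr : Fin b × Fin b => pr.2 < pr.1),
      η pr.1 * η pr.2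
      = ∑ pr ∈ Finset.univ.filter (fun pr : Fin b × Fin b => pr.1 < pr.2),
          η pr.1 * η pr.2 := by
    apply Finset.sum_nbij' (fun pr => Prod.swap pr) (fun pr => Prod.swap pr) <;>
      simp [mul_comm]
  have hdiag : ∑ pr ∈ Finset.univ.filter (fun pr : Fin b × Fin b => pr.1 = pr.2),
      η pr.1 * η pr.2 = ∑ i, η i ^ 2 := by
    rw [Finset.sum_filter, Fintype.sum_prod_type]
    simp [sq]
  have hsplit : ∑ pr : Fin b × Fin b, η pr.1 * η pr.2
      = (∑ pr ∈ Finset.univ.filter (fun pr : Fin b × Fin b => pr.1 < pr.2), η pr.1 * η pr.2)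
      + (∑ pr ∈ Finset.univ.filter (fun pr : Fin b × Fin b => pr.1 = pr.2), η pr.1 * η pr.2)
      + (∑ pr ∈ Finset.univ.filter (fun pr : Fin b × Fin b => pr.2 < pr.1), η pr.1 * η pr.2) := by
    rw [← Finset.sum_filter_add_sum_filter_not Finset.univ (fun pr : Fin b × Fin b => pr.1 < pr.2), add_assoc]
    congr 1
    rw [← Finset.sum_filter_add_sum_filter_not (Finset.univ.filter (fun pr : Fin b × Fin b => ¬ pr.1 < pr.2)) (fun pr => pr.1 = pr.2)]
    congr 1
    · apply Finset.sum_congr _ (fun _ _ => rfl)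
      rw [Finset.filter_filter]
      apply Finset.filter_congr
      intro pr _
      constructor
      · rintro ⟨_, h⟩; exact h
      · intro h; exact ⟨by omega, h⟩
    · apply Finset.sum_congr _ (fun _ _ => rfl)
      rw [Finset.filter_filter]
      apply Finset.filter_congr
      intro pr _
      constructor
      · rintro ⟨h1, h2⟩; omega
      · intro h; exact ⟨by omega, by omega⟩
  rw [htot, hsplit, hswap, hdiag]; ring

theorem reduced_quadratic_bound (b : ℕ) (hb : 1 ≤ b)
    (M1 M2 M3 M4 : ℝ) (hM1 : 0 ≤ M1) (hM2 : 0 ≤ M2) (hM3 : 0 ≤ M3) (hM4 : 0 ≤ M4)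
    (η0 : ℝ) (η : Fin b → ℝ) (hη0 : 0 ≤ η0) (hη : ∀ i, 0 ≤ η i)
    (hsum : η0 + ∑ i, η i = 1) :
    η0 ^ 2 * M1 + 2 * η0 * (∑ i, η i) * M2 + (∑ i, η i ^ 2) * M3
        + 2 * (∑ pr ∈ Finset.univ.filter (fun pr : Fin b × Fin b => pr.1 < pr.2),
            η pr.1 * η pr.2) * M4
      ≤ ⨆ t : Set.Icc (0 : ℝ) 1,
          (M1 * (t : ℝ) ^ 2 + 2 * M2 * (t : ℝ) * (1 - (t : ℝ))
            + max M3 M4 * (1 - (t : ℝ)) ^ 2) := by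
  set M := max M3 M4 with hM
  have hMnn : 0 ≤ M := le_trans hM3 (le_max_left _ _)
  set s := ∑ i, η i with hs
  have hsnn : 0 ≤ s := Finset.sum_nonneg fun i _ => hη i
  have hA : 0 ≤ ∑ i, η i ^ 2 := Finset.sum_nonneg fun i _ => sq_nonneg _
  have hB : 0 ≤ ∑ pr ∈ Finset.univ.filter (fun pr : Fin b × Fin b => pr.1 < pr.2),
      η pr.1 * η pr.2 := Finset.sum_nonneg fun pr _ => mul_nonneg (hη _) (hη _)
  have hid := sq_sum_eq_aux b η
  rw [← hs] at hid
  have hη01 : η0 ≤ 1 := by linarith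
  have hstep : η0 ^ 2 * M1 + 2 * η0 * s * M2 + (∑ i, η i ^ 2) * M3
        + 2 * (∑ pr ∈ Finset.univ.filter (fun pr : Fin b × Fin b => pr.1 < pr.2),
            η pr.1 * η pr.2) * M4
      ≤ M1 * η0 ^ 2 + 2 * M2 * η0 * (1 - η0) + M * (1 - η0) ^ 2 := by
    have h1 : (∑ i, η i ^ 2) * M3 ≤ (∑ i, η i ^ 2) * M :=
      mul_le_mul_of_nonneg_left (le_max_left _ _) hA
    have h2 : 2 * (∑ pr ∈ Finset.univ.filter (fun pr : Fin b × Fin b => pr.1 < pr.2),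
        η pr.1 * η pr.2) * M4 ≤ 2 * (∑ pr ∈ Finset.univ.filter
          (fun pr : Fin b × Fin b => pr.1 < pr.2), η pr.1 * η pr.2) * M :=
      mul_le_mul_of_nonneg_left (le_max_right _ _) (by linarith)
    have hse : s = 1 - η0 := by linarith
    have h3 : (∑ i, η i ^ 2) * M + 2 * (∑ pr ∈ Finset.univ.filter
        (fun pr : Fin b × Fin b => pr.1 < pr.2), η pr.1 * η pr.2) * M
        = (1 - η0) ^ 2 * M := by rw [← hse]; nlinarith [hid]
    have h4 : 2 * η0 * s * M2 = 2 * M2 * η0 * (1 - η0) := by rw [hse]; ring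
    linarith
  refine le_trans hstep ?_
  have hbdd : BddAbove (Set.range fun t : Set.Icc (0 : ℝ) 1 =>
      M1 * (t : ℝ) ^ 2 + 2 * M2 * (t : ℝ) * (1 - (t : ℝ)) + M * (1 - (t : ℝ)) ^ 2) := by
    refine ⟨M1 + 2 * M2 + M, ?_⟩
    rintro _ ⟨t, rfl⟩
    obtain ⟨ht0, ht1⟩ := t.2
    dsimp only
    have e1 : M1 * (t : ℝ) ^ 2 ≤ M1 := by
      nlinarith [mul_nonneg (mul_nonneg hM1 (by linarith : (0:ℝ) ≤ 1 - (t : ℝ)))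
        (by linarith : (0:ℝ) ≤ 1 + (t : ℝ))]
    have e2 : 2 * M2 * (t : ℝ) * (1 - (t : ℝ)) ≤ 2 * M2 := by nlinarith
    have e3 : M * (1 - (t : ℝ)) ^ 2 ≤ M := by
      nlinarith [mul_nonneg (mul_nonneg hMnn ht0) (by linarith : (0:ℝ) ≤ 2 - (t : ℝ))]
    linarith
  exact le_ciSup hbdd (⟨η0, hη0, hη01⟩ : Set.Icc (0 : ℝ) 1)
end

section
/- For $b = 6$ and $j = 4$: for every probability distribution $p$ on $\{1,\ldots,6\}$, $\Psi(p,p) \leq 5/27$, with equality if and only if $p$ is the uniform distribution $(1/6,\ldots,1/6)$. -/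
open Finset

def Br (a b c d e f : ℝ) : ℝ :=
  4*(a^3+b^3) + 27*(a^2+b^2)*(c+d+e+f) + 27*a*b*(c+d+e+f) + 184*(a+b)*(c*d+c*e+c*f+d*e+d*f+e*f) + 49*(c^3+d^3+e^3+f^3) + 100*(c^2*d+c^2*e+c^2*f+d^2*c+d^2*e+d^2*f+e^2*c+e^2*d+e^2*f+f^2*c+f^2*d+f^2*e) + 1176*(c*d*e+c*d*f+c*e*f+d*e*f)

theorem Br_nonneg {a b c d e f : ℝ} (ha : 0 ≤ a) (hb : 0 ≤ b) (hc : 0 ≤ c)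
    (hd : 0 ≤ d) (he : 0 ≤ e) (hf : 0 ≤ f) : 0 ≤ Br a b c d e f := by
  unfold Br
  positivity

theorem Br_eq {a b c d e f : ℝ} (ha : 0 ≤ a) (hb : 0 ≤ b) (hc : 0 ≤ c)
    (hd : 0 ≤ d) (he : 0 ≤ e) (hf : 0 ≤ f)
    (h : (a - b)^2 * Br a b c d e f = 0) : a = b := by
  rcases mul_eq_zero.mp h with h1 | h2
  · have := sq_eq_zero_iff.mp h1
    linarith
  · unfold Br at h2
    have hR : 0 ≤ 27*(a^2+b^2)*(c+d+e+f) + 27*a*b*(c+d+e+f) + 184*(a+b)*(c*d+c*e+c*f+d*e+d*f+e*f) + 49*(c^3+d^3+e^3+f^3) + 100*(c^2*d+c^2*e+c^2*f+d^2*c+d^2*e+d^2*f+e^2*c+e^2*d+e^2*f+f^2*c+f^2*d+f^2*e) + 1176*(c*d*e+c*d*f+c*e*f+d*e*f) := by positivity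
    have ha3 : 0 ≤ a^3 := pow_nonneg ha 3
    have hb3 : 0 ≤ b^3 := pow_nonneg hb 3
    have haz : a^3 = 0 := by linarith
    have hbz : b^3 = 0 := by linarith
    have h4 : a = 0 := pow_eq_zero_iff (n := 3) (by norm_num) |>.mp haz
    have h5 : b = 0 := pow_eq_zero_iff (n := 3) (by norm_num) |>.mp hbz
    rw [h4, h5]

set_option maxHeartbeats 4000000 in
set_option maxRecDepth 100000 in
theorem cert_identity (x0 x1 x2 x3 x4 x5 : ℝ) :
    20*((x0+x1+x2+x3+x4+x5)^5 - 1296*(x1*x2*x3*x4*x5+x0*x2*x3*x4*x5+x0*x1*x3*x4*x5+x0*x1*x2*x4*x5+x0*x1*x2*x3*x5+x0*x1*x2*x3*x4)) =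
      (x0-x1)^2 * Br x0 x1 x2 x3 x4 x5 +
      (x0-x2)^2 * Br x0 x2 x1 x3 x4 x5 +
      (x0-x3)^2 * Br x0 x3 x1 x2 x4 x5 +
      (x0-x4)^2 * Br x0 x4 x1 x2 x3 x5 +
      (x0-x5)^2 * Br x0 x5 x1 x2 x3 x4 +
      (x1-x2)^2 * Br x1 x2 x0 x3 x4 x5 +
      (x1-x3)^2 * Br x1 x3 x0 x2 x4 x5 +
      (x1-x4)^2 * Br x1 x4 x0 x2 x3 x5 +
      (x1-x5)^2 * Br x1 x5 x0 x2 x3 x4 +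
      (x2-x3)^2 * Br x2 x3 x0 x1 x4 x5 +
      (x2-x4)^2 * Br x2 x4 x0 x1 x3 x5 +
      (x2-x5)^2 * Br x2 x5 x0 x1 x3 x4 +
      (x3-x4)^2 * Br x3 x4 x0 x1 x2 x5 +
      (x3-x5)^2 * Br x3 x5 x0 x1 x2 x4 +
      (x4-x5)^2 * Br x4 x5 x0 x1 x2 x3 := by
  simp only [Br]
  ring

theorem permSum (h : Fin 6 → ℝ) (c : Fin 6) :
    ∑ σ : Equiv.Perm (Fin 6), h (σ c) = 120 * ∑ j, h j := by
  have h1 : ∑ σ : Equiv.Perm (Fin 6), h (σ c)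
      = ∑ σ : Equiv.Perm (Fin 6), h (σ 0) := by
    rw [← Equiv.sum_comp (Equiv.mulRight (Equiv.swap 0 c)) (fun σ => h (σ 0))]
    simp [Equiv.Perm.mul_apply]
  rw [h1, ← Equiv.sum_comp (Equiv.Perm.decomposeFin).symm (fun σ => h (σ 0))]
  rw [Fintype.sum_prod_type]
  simp [Equiv.Perm.decomposeFin_symm_apply_zero, Finset.sum_const, Fintype.card_perm]
  rw [← Finset.mul_sum]
  norm_num [Nat.factorial]

theorem perm_prod (p : Fin 6 → ℝ) (σ : Equiv.Perm (Fin 6)) :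
    (∏ t : Fin 4, p (σ (Fin.castLE (by omega) t))) * p (σ (⟨4, by omega⟩ : Fin 6))
      = ∏ i ∈ univ.erase (σ (⟨5, by omega⟩ : Fin 6)), p i := by
  have himg : (univ : Finset (Fin 5)).image (fun t => σ (Fin.castLE (by omega) t))
      = univ.erase (σ (⟨5, by omega⟩ : Fin 6)) := by
    ext i
    simp only [Finset.mem_image, Finset.mem_erase, Finset.mem_univ, and_true, true_and]
    constructor
    · rintro ⟨t, rfl⟩
      intro hc
      have h2 := congrArg Fin.val (σ.injective hc)
      simp only [Fin.castLE] at h2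
      have := t.isLt
      omega
    · intro hi
      have h5 : (σ.symm i : Fin 6).val ≠ 5 := by
        intro hc
        apply hi
        have : σ.symm i = (⟨5, by omega⟩ : Fin 6) := Fin.ext hc
        rw [← this]; simp
      have hlt : (σ.symm i : Fin 6).val < 5 := by
        have := (σ.symm i).isLt; omega
      refine ⟨⟨(σ.symm i : Fin 6).val, hlt⟩, ?_⟩
      have hcast : (Fin.castLE (by omega : 5 ≤ 6) (⟨(σ.symm i : Fin 6).val, hlt⟩ : Fin 5)) = σ.symm i :=
        Fin.ext rfl
      rw [hcast]; simp
  rw [← himg, Finset.prod_image (by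
    intro a _ b _ hab
    exact Fin.castLE_injective _ (σ.injective hab))]
  rw [Fin.prod_univ_castSucc (n := 4) (f := fun t : Fin 5 => p (σ (Fin.castLE (by omega) t)))]
  congr 1

theorem erase_sum (p : Fin 6 → ℝ) :
    ∑ j, ∏ i ∈ univ.erase j, p i =
      p 1*p 2*p 3*p 4*p 5 + p 0*p 2*p 3*p 4*p 5 + p 0*p 1*p 3*p 4*p 5
      + p 0*p 1*p 2*p 4*p 5 + p 0*p 1*p 2*p 3*p 5 + p 0*p 1*p 2*p 3*p 4 := by
  rw [Fin.sum_univ_six]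
  have e0 : (univ : Finset (Fin 6)).erase 0 = {1,2,3,4,5} := by decide
  have e1 : (univ : Finset (Fin 6)).erase 1 = {0,2,3,4,5} := by decide
  have e2 : (univ : Finset (Fin 6)).erase 2 = {0,1,3,4,5} := by decide
  have e3 : (univ : Finset (Fin 6)).erase 3 = {0,1,2,4,5} := by decide
  have e4 : (univ : Finset (Fin 6)).erase 4 = {0,1,2,3,5} := by decide
  have e5 : (univ : Finset (Fin 6)).erase 5 = {0,1,2,3,4} := by decide
  rw [e0, e1, e2, e3, e4, e5]
  simp [Finset.prod_insert, Finset.mem_insert]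
  ring

set_option maxHeartbeats 1000000 in
theorem psi_six_four_max (p : Fin 6 → ℝ) (hp : ∀ a, 0 ≤ p a) (hps : ∑ a, p a = 1) :
    psiPerm 6 4 (by norm_num) p p ≤ 5 / 27 ∧
    (psiPerm 6 4 (by norm_num) p p = 5 / 27 ↔ p = fun _ => 1 / 6) := by
  have hps6 : p 0 + p 1 + p 2 + p 3 + p 4 + p 5 = 1 := by
    rw [Fin.sum_univ_six] at hps; exact hps
  have hpsi : psiPerm 6 4 (by norm_num) p p =
      240 * (p 1*p 2*p 3*p 4*p 5+p 0*p 2*p 3*p 4*p 5+p 0*p 1*p 3*p 4*p 5+p 0*p 1*p 2*p 4*p 5+p 0*p 1*p 2*p 3*p 5+p 0*p 1*p 2*p 3*p 4) := by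
    unfold psiPerm
    have hterm : ∀ σ : Equiv.Perm (Fin 6),
        ((∏ t : Fin 4, p (σ (Fin.castLE (by omega) t))) * p (σ (⟨4, by omega⟩ : Fin 6))
          + (∏ t : Fin 4, p (σ (Fin.castLE (by omega) t))) * p (σ (⟨4, by omega⟩ : Fin 6)))
        = (fun j => 2 * ∏ i ∈ univ.erase j, p i) (σ (⟨5, by omega⟩ : Fin 6)) := by
      intro σ
      have := perm_prod p σ
      simp only []
      rw [this]
      ring
    rw [Finset.sum_congr rfl (fun σ _ => hterm σ)]
    rw [permSum (fun j => 2 * ∏ i ∈ univ.erase j, p i) (⟨5, by omega⟩ : Fin 6)]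
    rw [← Finset.mul_sum]
    rw [erase_sum p]
    norm_num [Nat.factorial]
    ring
  have hkey : 5 / 27 - psiPerm 6 4 (by norm_num) p p =
      ((p 0-p 1)^2 * Br (p 0) (p 1) (p 2) (p 3) (p 4) (p 5) +
      (p 0-p 2)^2 * Br (p 0) (p 2) (p 1) (p 3) (p 4) (p 5) +
      (p 0-p 3)^2 * Br (p 0) (p 3) (p 1) (p 2) (p 4) (p 5) +
      (p 0-p 4)^2 * Br (p 0) (p 4) (p 1) (p 2) (p 3) (p 5) +
      (p 0-p 5)^2 * Br (p 0) (p 5) (p 1) (p 2) (p 3) (p 4) +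
      (p 1-p 2)^2 * Br (p 1) (p 2) (p 0) (p 3) (p 4) (p 5) +
      (p 1-p 3)^2 * Br (p 1) (p 3) (p 0) (p 2) (p 4) (p 5) +
      (p 1-p 4)^2 * Br (p 1) (p 4) (p 0) (p 2) (p 3) (p 5) +
      (p 1-p 5)^2 * Br (p 1) (p 5) (p 0) (p 2) (p 3) (p 4) +
      (p 2-p 3)^2 * Br (p 2) (p 3) (p 0) (p 1) (p 4) (p 5) +
      (p 2-p 4)^2 * Br (p 2) (p 4) (p 0) (p 1) (p 3) (p 5) +
      (p 2-p 5)^2 * Br (p 2) (p 5) (p 0) (p 1) (p 3) (p 4) +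
      (p 3-p 4)^2 * Br (p 3) (p 4) (p 0) (p 1) (p 2) (p 5) +
      (p 3-p 5)^2 * Br (p 3) (p 5) (p 0) (p 1) (p 2) (p 4) +
      (p 4-p 5)^2 * Br (p 4) (p 5) (p 0) (p 1) (p 2) (p 3)) / 108 := by
    have hc := cert_identity (p 0) (p 1) (p 2) (p 3) (p 4) (p 5)
    rw [hps6] at hc
    rw [hpsi]
    linarith
  have h01 : 0 ≤ (p 0-p 1)^2 * Br (p 0) (p 1) (p 2) (p 3) (p 4) (p 5) := mul_nonneg (sq_nonneg _) (Br_nonneg (hp 0) (hp 1) (hp 2) (hp 3) (hp 4) (hp 5))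
  have h02 : 0 ≤ (p 0-p 2)^2 * Br (p 0) (p 2) (p 1) (p 3) (p 4) (p 5) := mul_nonneg (sq_nonneg _) (Br_nonneg (hp 0) (hp 2) (hp 1) (hp 3) (hp 4) (hp 5))
  have h03 : 0 ≤ (p 0-p 3)^2 * Br (p 0) (p 3) (p 1) (p 2) (p 4) (p 5) := mul_nonneg (sq_nonneg _) (Br_nonneg (hp 0) (hp 3) (hp 1) (hp 2) (hp 4) (hp 5))
  have h04 : 0 ≤ (p 0-p 4)^2 * Br (p 0) (p 4) (p 1) (p 2) (p 3) (p 5) := mul_nonneg (sq_nonneg _) (Br_nonneg (hp 0) (hp 4) (hp 1) (hp 2) (hp 3) (hp 5))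
  have h05 : 0 ≤ (p 0-p 5)^2 * Br (p 0) (p 5) (p 1) (p 2) (p 3) (p 4) := mul_nonneg (sq_nonneg _) (Br_nonneg (hp 0) (hp 5) (hp 1) (hp 2) (hp 3) (hp 4))
  have h12 : 0 ≤ (p 1-p 2)^2 * Br (p 1) (p 2) (p 0) (p 3) (p 4) (p 5) := mul_nonneg (sq_nonneg _) (Br_nonneg (hp 1) (hp 2) (hp 0) (hp 3) (hp 4) (hp 5))
  have h13 : 0 ≤ (p 1-p 3)^2 * Br (p 1) (p 3) (p 0) (p 2) (p 4) (p 5) := mul_nonneg (sq_nonneg _) (Br_nonneg (hp 1) (hp 3) (hp 0) (hp 2) (hp 4) (hp 5))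
  have h14 : 0 ≤ (p 1-p 4)^2 * Br (p 1) (p 4) (p 0) (p 2) (p 3) (p 5) := mul_nonneg (sq_nonneg _) (Br_nonneg (hp 1) (hp 4) (hp 0) (hp 2) (hp 3) (hp 5))
  have h15 : 0 ≤ (p 1-p 5)^2 * Br (p 1) (p 5) (p 0) (p 2) (p 3) (p 4) := mul_nonneg (sq_nonneg _) (Br_nonneg (hp 1) (hp 5) (hp 0) (hp 2) (hp 3) (hp 4))
  have h23 : 0 ≤ (p 2-p 3)^2 * Br (p 2) (p 3) (p 0) (p 1) (p 4) (p 5) := mul_nonneg (sq_nonneg _) (Br_nonneg (hp 2) (hp 3) (hp 0) (hp 1) (hp 4) (hp 5))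
  have h24 : 0 ≤ (p 2-p 4)^2 * Br (p 2) (p 4) (p 0) (p 1) (p 3) (p 5) := mul_nonneg (sq_nonneg _) (Br_nonneg (hp 2) (hp 4) (hp 0) (hp 1) (hp 3) (hp 5))
  have h25 : 0 ≤ (p 2-p 5)^2 * Br (p 2) (p 5) (p 0) (p 1) (p 3) (p 4) := mul_nonneg (sq_nonneg _) (Br_nonneg (hp 2) (hp 5) (hp 0) (hp 1) (hp 3) (hp 4))
  have h34 : 0 ≤ (p 3-p 4)^2 * Br (p 3) (p 4) (p 0) (p 1) (p 2) (p 5) := mul_nonneg (sq_nonneg _) (Br_nonneg (hp 3) (hp 4) (hp 0) (hp 1) (hp 2) (hp 5))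
  have h35 : 0 ≤ (p 3-p 5)^2 * Br (p 3) (p 5) (p 0) (p 1) (p 2) (p 4) := mul_nonneg (sq_nonneg _) (Br_nonneg (hp 3) (hp 5) (hp 0) (hp 1) (hp 2) (hp 4))
  have h45 : 0 ≤ (p 4-p 5)^2 * Br (p 4) (p 5) (p 0) (p 1) (p 2) (p 3) := mul_nonneg (sq_nonneg _) (Br_nonneg (hp 4) (hp 5) (hp 0) (hp 1) (hp 2) (hp 3))
  have hS : 0 ≤ ((p 0-p 1)^2 * Br (p 0) (p 1) (p 2) (p 3) (p 4) (p 5) +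
      (p 0-p 2)^2 * Br (p 0) (p 2) (p 1) (p 3) (p 4) (p 5) +
      (p 0-p 3)^2 * Br (p 0) (p 3) (p 1) (p 2) (p 4) (p 5) +
      (p 0-p 4)^2 * Br (p 0) (p 4) (p 1) (p 2) (p 3) (p 5) +
      (p 0-p 5)^2 * Br (p 0) (p 5) (p 1) (p 2) (p 3) (p 4) +
      (p 1-p 2)^2 * Br (p 1) (p 2) (p 0) (p 3) (p 4) (p 5) +
      (p 1-p 3)^2 * Br (p 1) (p 3) (p 0) (p 2) (p 4) (p 5) +
      (p 1-p 4)^2 * Br (p 1) (p 4) (p 0) (p 2) (p 3) (p 5) +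
      (p 1-p 5)^2 * Br (p 1) (p 5) (p 0) (p 2) (p 3) (p 4) +
      (p 2-p 3)^2 * Br (p 2) (p 3) (p 0) (p 1) (p 4) (p 5) +
      (p 2-p 4)^2 * Br (p 2) (p 4) (p 0) (p 1) (p 3) (p 5) +
      (p 2-p 5)^2 * Br (p 2) (p 5) (p 0) (p 1) (p 3) (p 4) +
      (p 3-p 4)^2 * Br (p 3) (p 4) (p 0) (p 1) (p 2) (p 5) +
      (p 3-p 5)^2 * Br (p 3) (p 5) (p 0) (p 1) (p 2) (p 4) +
      (p 4-p 5)^2 * Br (p 4) (p 5) (p 0) (p 1) (p 2) (p 3)) := by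
    linarith
  constructor
  · linarith
  constructor
  · intro heq
    have hS0 : ((p 0-p 1)^2 * Br (p 0) (p 1) (p 2) (p 3) (p 4) (p 5) +
      (p 0-p 2)^2 * Br (p 0) (p 2) (p 1) (p 3) (p 4) (p 5) +
      (p 0-p 3)^2 * Br (p 0) (p 3) (p 1) (p 2) (p 4) (p 5) +
      (p 0-p 4)^2 * Br (p 0) (p 4) (p 1) (p 2) (p 3) (p 5) +
      (p 0-p 5)^2 * Br (p 0) (p 5) (p 1) (p 2) (p 3) (p 4) +
      (p 1-p 2)^2 * Br (p 1) (p 2) (p 0) (p 3) (p 4) (p 5) +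
      (p 1-p 3)^2 * Br (p 1) (p 3) (p 0) (p 2) (p 4) (p 5) +
      (p 1-p 4)^2 * Br (p 1) (p 4) (p 0) (p 2) (p 3) (p 5) +
      (p 1-p 5)^2 * Br (p 1) (p 5) (p 0) (p 2) (p 3) (p 4) +
      (p 2-p 3)^2 * Br (p 2) (p 3) (p 0) (p 1) (p 4) (p 5) +
      (p 2-p 4)^2 * Br (p 2) (p 4) (p 0) (p 1) (p 3) (p 5) +
      (p 2-p 5)^2 * Br (p 2) (p 5) (p 0) (p 1) (p 3) (p 4) +
      (p 3-p 4)^2 * Br (p 3) (p 4) (p 0) (p 1) (p 2) (p 5) +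
      (p 3-p 5)^2 * Br (p 3) (p 5) (p 0) (p 1) (p 2) (p 4) +
      (p 4-p 5)^2 * Br (p 4) (p 5) (p 0) (p 1) (p 2) (p 3)) = 0 := by linarith
    have huniv : ∀ i, p i = 1/6 := by
      have hz01 : (p 0-p 1)^2 * Br (p 0) (p 1) (p 2) (p 3) (p 4) (p 5) = 0 := by linarith
      have he01 : p 0 = p 1 := Br_eq (hp 0) (hp 1) (hp 2) (hp 3) (hp 4) (hp 5) hz01
      have hz02 : (p 0-p 2)^2 * Br (p 0) (p 2) (p 1) (p 3) (p 4) (p 5) = 0 := by linarith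
      have he02 : p 0 = p 2 := Br_eq (hp 0) (hp 2) (hp 1) (hp 3) (hp 4) (hp 5) hz02
      have hz03 : (p 0-p 3)^2 * Br (p 0) (p 3) (p 1) (p 2) (p 4) (p 5) = 0 := by linarith
      have he03 : p 0 = p 3 := Br_eq (hp 0) (hp 3) (hp 1) (hp 2) (hp 4) (hp 5) hz03
      have hz04 : (p 0-p 4)^2 * Br (p 0) (p 4) (p 1) (p 2) (p 3) (p 5) = 0 := by linarith
      have he04 : p 0 = p 4 := Br_eq (hp 0) (hp 4) (hp 1) (hp 2) (hp 3) (hp 5) hz04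
      have hz05 : (p 0-p 5)^2 * Br (p 0) (p 5) (p 1) (p 2) (p 3) (p 4) = 0 := by linarith
      have he05 : p 0 = p 5 := Br_eq (hp 0) (hp 5) (hp 1) (hp 2) (hp 3) (hp 4) hz05
      have h0 : p 0 = 1/6 := by linarith
      intro i
      fin_cases i <;> simp <;> linarith
    funext i
    simp [huniv i]
  · intro hu
    rw [hpsi, hu]
    norm_num
end
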